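/- Let Λ = {Λ_i ∈ B(X₂, Y_i)} be a qg-Riesz basis for X₂^* with bounds A_Λ, B_Λ. Then there exists a sequence {~Λ_i ∈ B(X₂^*, Y_i^*)} which is a qg-frame for X₂^* with bounds 1/B_Λ and 1/A_Λ, satisfying x^* = Σ_i Λ_i^* (~Λ_i x^*) for every x^* ∈ X₂^*, and ~Λ_k ∘ Λ_i^* = δ_{k,i} Id on Y_i^*. Moreover {~Λ_i} is a pg-Riesz basis for X₂. -/

import Mathlib

open NormedSpace Filter

/-- The Banach-space adjoint (dual map) of a continuous linear map. -/
noncomputable def opAdj {X Y : Type*} [NormedAddCommGroup X] [NormedSpace ℝ X]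
    [NormedAddCommGroup Y] [NormedSpace ℝ Y] (T : X →L[ℝ] Y) :
    StrongDual ℝ Y →L[ℝ] StrongDual ℝ X :=
  (ContinuousLinearMap.compL ℝ X Y ℝ).flip T

/-
The Riesz bounds say that the synthesis operator `T g = ∑ᵢ Λᵢ* gᵢ` on `ℓ^q(Yᵢ*)` satisfies
`A ‖g‖ ≤ ‖T g‖ ≤ B ‖g‖`, so its range in `X₂*` is closed; it is also dense, since by
reflexivity of `X₂` a functional on `X₂*` annihilating every `Λᵢ* y` is evaluation at some `x`
with `Λᵢ x = 0` for all `i`. Hence `T` is an isomorphism and `~Λᵢ` is the `i`-th coordinate of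
`T⁻¹`: the frame bounds are the bounds of `T⁻¹`, reconstruction is `T T⁻¹ = id`, and
biorthogonality is `T⁻¹ (Λᵢ* y) = δᵢ y`. For the pg-Riesz bounds of `~Λ`, the upper one is
Hölder's inequality against the frame bound `1/A`, and the lower one is finite `ℓ^p`–`ℓ^q`
duality tested on the vectors `∑ᵢ Λᵢ* gᵢ`, whose `~Λ`-coordinates are exactly the `gᵢ`.
-/

open scoped ENNReal Topology

instance ENNReal.fact_one_le_ofReal {q : ℝ} [Fact (1 ≤ q)] : Fact (1 ≤ ENNReal.ofReal q) :=
  ⟨by simpa using ENNReal.ofReal_le_ofReal (Fact.out : (1 : ℝ) ≤ q)⟩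

lemma opAdj_apply {X Y : Type*} [NormedAddCommGroup X] [NormedSpace ℝ X]
    [NormedAddCommGroup Y] [NormedSpace ℝ Y] (T : X →L[ℝ] Y) (g : StrongDual ℝ Y) (x : X) :
    opAdj T g x = g (T x) := rfl

theorem Submodule.eq_top_of_isClosed_of_forall_dual_eq_zero {F : Type*} [NormedAddCommGroup F]
    [NormedSpace ℝ F] (V : Submodule ℝ F) (hV : IsClosed (V : Set F))
    (h : ∀ φ : StrongDual ℝ F, (∀ v ∈ V, φ v = 0) → φ = 0) : V = ⊤ := by
  refine V.eq_top_iff'.mpr fun f => ?_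
  by_contra hf
  obtain ⟨φ, u, hφf, hφV⟩ := geometric_hahn_banach_point_closed V.convex hV hf
  -- a functional bounded below on a subspace vanishes there
  have hφ : ∀ v ∈ V, φ v = 0 := fun v hv => by
    by_contra hv0
    have := hφV (((u - 1) / φ v) • v) (V.smul_mem _ hv)
    rw [map_smul, smul_eq_mul, div_mul_cancel₀ _ hv0] at this
    linarith
  have h0 := hφV 0 V.zero_mem
  rw [h φ hφ] at hφf h0
  exact (hφf.trans h0).false

lemma StrongDual.exists_norm_le_one_mul_norm_le_apply {V : Type*} [NormedAddCommGroup V]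
    [NormedSpace ℝ V] (φ : StrongDual ℝ V) {t : ℝ} (ht : t < 1) :
    ∃ u, ‖u‖ ≤ 1 ∧ t * ‖φ‖ ≤ φ u := by
  rcases eq_or_ne φ 0 with rfl | hφ
  · exact ⟨0, by simp, by simp⟩
  obtain ⟨u, hu, hlt⟩ :=
    φ.exists_lt_apply_of_lt_opNorm (mul_lt_of_lt_one_left (norm_pos_iff.mpr hφ) ht)
  rcases lt_abs.mp (Real.norm_eq_abs (φ u) ▸ hlt) with h | h
  · exact ⟨u, hu.le, h.le⟩
  · exact ⟨-u, by rw [norm_neg]; exact hu.le, by simpa using h.le⟩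

namespace lp

variable {ι : Type*} {E : ι → Type*} [∀ i, NormedAddCommGroup (E i)] {q : ℝ}

lemma summable_norm_rpow_ofReal (hq : 0 < q) (g : lp E (.ofReal q)) :
    Summable fun i => ‖g i‖ ^ q := by
  have h := (lp.memℓp g).summable (by rwa [ENNReal.toReal_ofReal hq.le])
  rwa [ENNReal.toReal_ofReal hq.le] at h

lemma norm_ofReal_eq_tsum_rpow (hq : 0 < q) (g : lp E (.ofReal q)) :
    ‖g‖ = (∑' i, ‖g i‖ ^ q) ^ (1 / q) := by
  have h := lp.norm_eq_tsum_rpow (by rwa [ENNReal.toReal_ofReal hq.le]) g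
  rwa [ENNReal.toReal_ofReal hq.le] at h

lemma tendsto_sum_norm_rpow_rpow (hq : 0 < q) (g : lp E (.ofReal q)) :
    Tendsto (fun s : Finset ι => (∑ i ∈ s, ‖g i‖ ^ q) ^ (1 / q)) atTop (𝓝 ‖g‖) := by
  rw [norm_ofReal_eq_tsum_rpow hq]
  exact (summable_norm_rpow_ofReal hq g).hasSum.rpow_const (.inr (by positivity))

lemma sum_norm_rpow_rpow_le_norm (hq : 0 < q) (g : lp E (.ofReal q)) (s : Finset ι) :
    (∑ i ∈ s, ‖g i‖ ^ q) ^ (1 / q) ≤ ‖g‖ := by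
  rw [norm_ofReal_eq_tsum_rpow hq]
  gcongr
  exact (summable_norm_rpow_ofReal hq g).sum_le_tsum s fun i _ => by positivity

end lp

section Synthesis

variable {ι : Type*} {E : ι → Type*} [∀ i, NormedAddCommGroup (E i)] [∀ i, NormedSpace ℝ (E i)]
  {F : Type*} [NormedAddCommGroup F] [NormedSpace ℝ F]

def IsUpperRieszBound (L : ∀ i, E i →L[ℝ] F) (q B : ℝ) : Prop :=
  ∀ (s : Finset ι) (g : ∀ i, E i), ‖∑ i ∈ s, L i (g i)‖ ≤ B * (∑ i ∈ s, ‖g i‖ ^ q) ^ (1 / q)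

def IsLowerRieszBound (L : ∀ i, E i →L[ℝ] F) (q A : ℝ) : Prop :=
  ∀ (s : Finset ι) (g : ∀ i, E i), A * (∑ i ∈ s, ‖g i‖ ^ q) ^ (1 / q) ≤ ‖∑ i ∈ s, L i (g i)‖

variable {q A B : ℝ} [Fact (1 ≤ q)] {L : ∀ i, E i →L[ℝ] F}

lemma IsUpperRieszBound.summable [CompleteSpace F] (hB : IsUpperRieszBound L q B) (hB0 : 0 < B)
    (g : lp E (.ofReal q)) : Summable fun i => L i (g i) := by
  have hq : 0 < q := zero_lt_one.trans_le Fact.out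
  have hg := lp.summable_norm_rpow_ofReal hq g
  rw [summable_iff_cauchySeq_finset, cauchySeq_finset_iff_vanishing_norm] at hg ⊢
  intro ε hε
  obtain ⟨s, hs⟩ := hg _ (Real.rpow_pos_of_pos (div_pos hε hB0) q)
  refine ⟨s, fun t ht => ?_⟩
  have hsmall : (∑ i ∈ t, ‖g i‖ ^ q) ^ (1 / q) < ε / B := by
    have := hs t ht
    rw [Real.norm_of_nonneg (by positivity)] at this
    rwa [one_div, Real.rpow_inv_lt_iff_of_pos (by positivity) (by positivity) hq]
  calc ‖∑ i ∈ t, L i (g i)‖ ≤ B * (∑ i ∈ t, ‖g i‖ ^ q) ^ (1 / q) := hB t g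
    _ < B * (ε / B) := by gcongr
    _ = ε := mul_div_cancel₀ ε hB0.ne'

variable [CompleteSpace F]

lemma IsUpperRieszBound.norm_tsum_le (hB : IsUpperRieszBound L q B) (hB0 : 0 < B)
    (g : lp E (.ofReal q)) : ‖∑' i, L i (g i)‖ ≤ B * ‖g‖ :=
  le_of_tendsto_of_tendsto' (hB.summable hB0 g).hasSum.norm
    ((lp.tendsto_sum_norm_rpow_rpow (zero_lt_one.trans_le Fact.out) g).const_mul B) (hB · g)

variable (L) in
noncomputable def synthesis (hB : IsUpperRieszBound L q B) (hB0 : 0 < B) :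
    lp E (.ofReal q) →L[ℝ] F :=
  LinearMap.mkContinuous
    { toFun g := ∑' i, L i (g i)
      map_add' g g' := by
        simp only [lp.coeFn_add, Pi.add_apply, map_add]
        exact (hB.summable hB0 g).tsum_add (hB.summable hB0 g')
      map_smul' c g := by
        simp only [lp.coeFn_smul, Pi.smul_apply, map_smul, RingHom.id_apply]
        exact (hB.summable hB0 g).tsum_const_smul c }
    B (hB.norm_tsum_le hB0)

variable (hB : IsUpperRieszBound L q B) (hB0 : 0 < B)

lemma hasSum_synthesis (g : lp E (.ofReal q)) :
    HasSum (fun i => L i (g i)) (synthesis L hB hB0 g) :=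
  (hB.summable hB0 g).hasSum

lemma synthesis_single [DecidableEq ι] (i : ι) (y : E i) :
    synthesis L hB hB0 (lp.single _ i y) = L i y := by
  have hsingle := hasSum_single (f := fun j => L j (lp.single (.ofReal q) i y j)) i
    fun j hj => by simp [hj]
  simpa using (hasSum_synthesis hB hB0 _).unique hsingle

lemma IsLowerRieszBound.le_norm_synthesis (hA : IsLowerRieszBound L q A) (g : lp E (.ofReal q)) :
    A * ‖g‖ ≤ ‖synthesis L hB hB0 g‖ :=
  le_of_tendsto_of_tendsto'
    ((lp.tendsto_sum_norm_rpow_rpow (zero_lt_one.trans_le Fact.out) g).const_mul A)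
    (hasSum_synthesis hB hB0 g).norm (hA · g)

lemma IsLowerRieszBound.antilipschitz_synthesis (hA : IsLowerRieszBound L q A) (hA0 : 0 < A) :
    AntilipschitzWith (Real.toNNReal A⁻¹) (synthesis L hB hB0) :=
  (synthesis L hB hB0).antilipschitz_of_bound fun g => by
    rw [Real.coe_toNNReal _ (by positivity), inv_mul_eq_div, le_div_iff₀ hA0, mul_comm]
    exact hA.le_norm_synthesis hB hB0 g

variable [∀ i, CompleteSpace (E i)]

lemma synthesis_surjective (hA : IsLowerRieszBound L q A) (hA0 : 0 < A)
    (hsep : ∀ φ : StrongDual ℝ F, (∀ i y, φ (L i y) = 0) → φ = 0) :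
    Function.Surjective (synthesis L hB hB0) := by
  classical
  refine LinearMap.range_eq_top.mp <| Submodule.eq_top_of_isClosed_of_forall_dual_eq_zero _
    ((hA.antilipschitz_synthesis hB hB0 hA0).isClosed_range (synthesis L hB hB0).uniformContinuous)
      fun φ hφ => hsep φ fun i y => hφ _ ⟨lp.single _ i y, synthesis_single hB hB0 i y⟩

variable (L) in
noncomputable def synthesisEquiv (hA : IsLowerRieszBound L q A) (hA0 : 0 < A)
    (hsep : ∀ φ : StrongDual ℝ F, (∀ i y, φ (L i y) = 0) → φ = 0) : lp E (.ofReal q) ≃L[ℝ] F :=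
  .ofBijective (synthesis L hB hB0)
    (LinearMap.ker_eq_bot.mpr (hA.antilipschitz_synthesis hB hB0 hA0).injective)
    (LinearMap.range_eq_top.mpr (synthesis_surjective hB hB0 hA hA0 hsep))

variable (hA : IsLowerRieszBound L q A) (hA0 : 0 < A)
  (hsep : ∀ φ : StrongDual ℝ F, (∀ i y, φ (L i y) = 0) → φ = 0)

variable (L) in
noncomputable def dualFamily (i : ι) : F →L[ℝ] E i :=
  lp.evalCLM ℝ E _ i ∘L ((synthesisEquiv L hB hB0 hA hA0 hsep).symm : F →L[ℝ] lp E (.ofReal q))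

variable {hB hB0 hA hA0 hsep}

lemma synthesis_synthesisEquiv_symm (f : F) :
    synthesis L hB hB0 ((synthesisEquiv L hB hB0 hA hA0 hsep).symm f) = f :=
  (synthesisEquiv L hB hB0 hA hA0 hsep).apply_symm_apply f

lemma dualFamily_apply (i : ι) (f : F) :
    dualFamily L hB hB0 hA hA0 hsep i f = (synthesisEquiv L hB hB0 hA hA0 hsep).symm f i :=
  rfl

lemma hasSum_apply_dualFamily (f : F) :
    HasSum (fun i => L i (dualFamily L hB hB0 hA hA0 hsep i f)) f := by
  have h := hasSum_synthesis hB hB0 ((synthesisEquiv L hB hB0 hA hA0 hsep).symm f)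
  rwa [synthesis_synthesisEquiv_symm] at h

lemma dualFamily_apply_apply [DecidableEq ι] (k i : ι) (y : E i) :
    dualFamily L hB hB0 hA hA0 hsep k (L i y) = Pi.single i y k := by
  have : (synthesisEquiv L hB hB0 hA hA0 hsep).symm (L i y) = lp.single _ i y :=
    (ContinuousLinearEquiv.symm_apply_eq _).mpr (synthesis_single hB hB0 i y).symm
  rw [dualFamily_apply, this, lp.single_apply]

lemma tsum_norm_dualFamily_rpow_rpow (f : F) :
    (∑' i, ‖dualFamily L hB hB0 hA hA0 hsep i f‖ ^ q) ^ (1 / q) =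
      ‖(synthesisEquiv L hB hB0 hA hA0 hsep).symm f‖ :=
  (lp.norm_ofReal_eq_tsum_rpow (zero_lt_one.trans_le Fact.out) _).symm

lemma summable_norm_dualFamily_rpow (f : F) :
    Summable fun i => ‖dualFamily L hB hB0 hA hA0 hsep i f‖ ^ q :=
  lp.summable_norm_rpow_ofReal (zero_lt_one.trans_le Fact.out) _

lemma inv_mul_norm_le_tsum_norm_dualFamily_rpow_rpow (f : F) :
    B⁻¹ * ‖f‖ ≤ (∑' i, ‖dualFamily L hB hB0 hA hA0 hsep i f‖ ^ q) ^ (1 / q) := by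
  rw [tsum_norm_dualFamily_rpow_rpow, inv_mul_le_iff₀ hB0]
  have h : ‖synthesis L hB hB0 ((synthesisEquiv L hB hB0 hA hA0 hsep).symm f)‖ ≤
      B * ‖(synthesisEquiv L hB hB0 hA hA0 hsep).symm f‖ :=
    hB.norm_tsum_le hB0 _
  rwa [synthesis_synthesisEquiv_symm] at h

lemma tsum_norm_dualFamily_rpow_rpow_le (f : F) :
    (∑' i, ‖dualFamily L hB hB0 hA hA0 hsep i f‖ ^ q) ^ (1 / q) ≤ A⁻¹ * ‖f‖ := by
  rw [tsum_norm_dualFamily_rpow_rpow, le_inv_mul_iff₀ hA0]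
  have h := hA.le_norm_synthesis hB hB0 ((synthesisEquiv L hB hB0 hA hA0 hsep).symm f)
  rwa [synthesis_synthesisEquiv_symm] at h

lemma sum_norm_dualFamily_rpow_rpow_le (f : F) (s : Finset ι) :
    (∑ i ∈ s, ‖dualFamily L hB hB0 hA hA0 hsep i f‖ ^ q) ^ (1 / q) ≤ A⁻¹ * ‖f‖ :=
  (lp.sum_norm_rpow_rpow_le_norm (zero_lt_one.trans_le Fact.out) _ s).trans <|
    (tsum_norm_dualFamily_rpow_rpow f).symm.trans_le (tsum_norm_dualFamily_rpow_rpow_le f)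

lemma eq_zero_of_forall_dualFamily_eq_zero {f : F}
    (hf : ∀ i, dualFamily L hB hB0 hA hA0 hsep i f = 0) : f = 0 := by
  have : (synthesisEquiv L hB hB0 hA hA0 hsep).symm f = 0 := lp.ext (funext hf)
  simpa using this

end Synthesis

section Duality

variable {ι : Type*} {G : ι → Type*} [∀ i, NormedAddCommGroup (G i)] [∀ i, NormedSpace ℝ (G i)]
  {F : Type*} [NormedAddCommGroup F] [NormedSpace ℝ F] {p q : ℝ}

theorem sum_norm_rpow_rpow_le_of_forall_sum_apply_le (hpq : p.HolderConjugate q)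
    (s : Finset ι) (h : ∀ i, StrongDual ℝ (G i)) {c : ℝ} (hc0 : 0 ≤ c)
    (hc : ∀ g : ∀ i, G i, ∑ i ∈ s, h i (g i) ≤ c * (∑ i ∈ s, ‖g i‖ ^ q) ^ (1 / q)) :
    (∑ i ∈ s, ‖h i‖ ^ p) ^ (1 / p) ≤ c := by
  set N := ∑ i ∈ s, ‖h i‖ ^ p
  rcases (show 0 ≤ N by positivity).eq_or_lt with hN | hN
  · rwa [← hN, Real.zero_rpow (one_div_pos.mpr hpq.pos).ne']
  have key : ∀ t < 1, N ^ (1 / p) * t ≤ c := by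
    intro t ht
    choose u hu1 hu using fun i => (h i).exists_norm_le_one_mul_norm_le_apply ht
    -- the extremal vector of Hölder's inequality, up to the factor `t`
    set g : ∀ i, G i := fun i => ‖h i‖ ^ (p - 1) • u i
    have hgq : ∑ i ∈ s, ‖g i‖ ^ q ≤ N := Finset.sum_le_sum fun i _ => calc
      ‖g i‖ ^ q ≤ (‖h i‖ ^ (p - 1)) ^ q := by
          refine Real.rpow_le_rpow (norm_nonneg _) ?_ hpq.symm.nonneg
          rw [norm_smul, Real.norm_of_nonneg (by positivity)]
          exact mul_le_of_le_one_right (by positivity) (hu1 i)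
      _ = ‖h i‖ ^ p := by rw [← Real.rpow_mul (norm_nonneg _), hpq.sub_one_mul_conj]
    have hhg : t * N ≤ ∑ i ∈ s, h i (g i) := by
      rw [Finset.mul_sum]
      refine Finset.sum_le_sum fun i _ => ?_
      calc t * ‖h i‖ ^ p = ‖h i‖ ^ (p - 1) * (t * ‖h i‖) := by
            rw [← sub_add_cancel p 1,
              Real.rpow_add_one' (norm_nonneg _) (by simpa using hpq.ne_zero), sub_add_cancel]
            ring
        _ ≤ ‖h i‖ ^ (p - 1) * h i (u i) := by gcongr; exact hu i
        _ = h i (g i) := by simp [g]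
    have hNpq : N ^ (1 / p) * N ^ (1 / q) = N := by
      rw [← Real.rpow_add hN, one_div, one_div, hpq.inv_add_inv_eq_one, Real.rpow_one]
    refine le_of_mul_le_mul_right ?_ (by positivity : 0 < N ^ (1 / q))
    calc N ^ (1 / p) * t * N ^ (1 / q) = t * N := by rw [mul_right_comm, hNpq, mul_comm]
      _ ≤ c * (∑ i ∈ s, ‖g i‖ ^ q) ^ (1 / q) := hhg.trans (hc g)
      _ ≤ c * N ^ (1 / q) :=
        mul_le_mul_of_nonneg_left
          (Real.rpow_le_rpow (by positivity) hgq (one_div_nonneg.mpr hpq.symm.nonneg)) hc0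
  refine le_of_forall_lt_imp_le_of_dense fun a ha => ?_
  have hpos : 0 < N ^ (1 / p) := by positivity
  calc a = N ^ (1 / p) * (a / N ^ (1 / p)) := by field_simp
    _ ≤ c := key _ ((div_lt_one hpos).mpr ha)

lemma norm_sum_opAdj_le (hpq : p.HolderConjugate q) (M : ∀ i, F →L[ℝ] G i) {C : ℝ} (hC : 0 ≤ C)
    (hM : ∀ (f : F) (s : Finset ι), (∑ i ∈ s, ‖M i f‖ ^ q) ^ (1 / q) ≤ C * ‖f‖)
    (s : Finset ι) (h : ∀ i, StrongDual ℝ (G i)) :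
    ‖∑ i ∈ s, opAdj (M i) (h i)‖ ≤ C * (∑ i ∈ s, ‖h i‖ ^ p) ^ (1 / p) := by
  refine ContinuousLinearMap.opNorm_le_bound _ (by positivity) fun f => ?_
  calc ‖(∑ i ∈ s, opAdj (M i) (h i)) f‖ = ‖∑ i ∈ s, h i (M i f)‖ := by
        simp [opAdj_apply]
    _ ≤ ∑ i ∈ s, ‖h i‖ * ‖M i f‖ :=
        (norm_sum_le _ _).trans (Finset.sum_le_sum fun i _ => (h i).le_opNorm _)
    _ ≤ (∑ i ∈ s, ‖h i‖ ^ p) ^ (1 / p) * (∑ i ∈ s, ‖M i f‖ ^ q) ^ (1 / q) :=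
        Real.inner_le_Lp_mul_Lq_of_nonneg s hpq (fun _ _ => norm_nonneg _)
          (fun _ _ => norm_nonneg _)
    _ ≤ (∑ i ∈ s, ‖h i‖ ^ p) ^ (1 / p) * (C * ‖f‖) := by gcongr; exact hM f s
    _ = C * (∑ i ∈ s, ‖h i‖ ^ p) ^ (1 / p) * ‖f‖ := by ring

lemma sum_norm_rpow_rpow_le_mul_norm_sum_opAdj [DecidableEq ι] (hpq : p.HolderConjugate q)
    (L : ∀ i, G i →L[ℝ] F) (M : ∀ i, F →L[ℝ] G i) {B : ℝ} (hB0 : 0 ≤ B)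
    (hB : IsUpperRieszBound L q B) (hML : ∀ k i (y : G i), M k (L i y) = Pi.single i y k)
    (s : Finset ι) (h : ∀ i, StrongDual ℝ (G i)) :
    (∑ i ∈ s, ‖h i‖ ^ p) ^ (1 / p) ≤ B * ‖∑ i ∈ s, opAdj (M i) (h i)‖ := by
  set Φ := ∑ i ∈ s, opAdj (M i) (h i)
  refine sum_norm_rpow_rpow_le_of_forall_sum_apply_le hpq s h (by positivity) fun g => ?_
  have hcoord : ∀ k ∈ s, M k (∑ i ∈ s, L i (g i)) = g k := fun k hk => by
    simp [map_sum, hML, hk]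
  calc ∑ k ∈ s, h k (g k) = Φ (∑ i ∈ s, L i (g i)) := by
        simp only [Φ, sum_apply, opAdj_apply]
        exact Finset.sum_congr rfl fun k hk => by rw [hcoord k hk]
    _ ≤ ‖Φ‖ * ‖∑ i ∈ s, L i (g i)‖ := (Real.le_norm_self _).trans (Φ.le_opNorm _)
    _ ≤ ‖Φ‖ * (B * (∑ i ∈ s, ‖g i‖ ^ q) ^ (1 / q)) := by gcongr; exact hB s g
    _ = B * ‖Φ‖ * (∑ i ∈ s, ‖g i‖ ^ q) ^ (1 / q) := by ring

end Duality

lemma eq_zero_of_forall_apply_opAdj_eq_zero {ι X : Type*} [NormedAddCommGroup X] [NormedSpace ℝ X]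
    {Y : ι → Type*} [∀ i, NormedAddCommGroup (Y i)] [∀ i, NormedSpace ℝ (Y i)]
    (hX : Function.Surjective (inclusionInDoubleDual ℝ X)) (Λ : ∀ i, X →L[ℝ] Y i)
    (hΛ : ∀ x, (∀ i, Λ i x = 0) → x = 0) (φ : StrongDual ℝ (StrongDual ℝ X))
    (hφ : ∀ i y, φ (opAdj (Λ i) y) = 0) : φ = 0 := by
  obtain ⟨x, rfl⟩ := hX φ
  rw [hΛ x fun i => SeparatingDual.eq_zero_of_forall_dual_eq_zero (hφ i), map_zero]

theorem qgRieszBasis_dual_sequence_general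
    {X₂ : Type*} [NormedAddCommGroup X₂] [NormedSpace ℝ X₂]
    {Y : ℕ → Type*} [∀ i, NormedAddCommGroup (Y i)] [∀ i, NormedSpace ℝ (Y i)]
    (hreflX₂ : Function.Surjective (inclusionInDoubleDual ℝ X₂))
    (p q : ℝ) (hp : 1 < p) (hpq : 1 / p + 1 / q = 1)
    (Λ : ∀ i, X₂ →L[ℝ] Y i) (AΛ BΛ : ℝ) (hAΛ : 0 < AΛ) (hBΛ : 0 < BΛ)
    (hcomplete : ∀ x : X₂, (∀ i, Λ i x = 0) → x = 0)
    (hriesz : ∀ (s : Finset ℕ) (g : ∀ i, StrongDual ℝ (Y i)),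
      AΛ * (∑ i ∈ s, ‖g i‖ ^ q) ^ (1 / q) ≤ ‖∑ i ∈ s, opAdj (Λ i) (g i)‖ ∧
      ‖∑ i ∈ s, opAdj (Λ i) (g i)‖ ≤ BΛ * (∑ i ∈ s, ‖g i‖ ^ q) ^ (1 / q)) :
    ∃ Λd : ∀ i, StrongDual ℝ X₂ →L[ℝ] StrongDual ℝ (Y i),
      -- `~Λ` is a qg-frame for `X₂*` with bounds `1/B_Λ` and `1/A_Λ`
      (∀ f : StrongDual ℝ X₂, Summable (fun i => ‖Λd i f‖ ^ q) ∧
        (1 / BΛ) * ‖f‖ ≤ (∑' i, ‖Λd i f‖ ^ q) ^ (1 / q) ∧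
        (∑' i, ‖Λd i f‖ ^ q) ^ (1 / q) ≤ (1 / AΛ) * ‖f‖) ∧
      -- reconstruction
      (∀ f : StrongDual ℝ X₂, Summable (fun i => opAdj (Λ i) (Λd i f)) ∧
        (∑' i, opAdj (Λ i) (Λd i f)) = f) ∧
      -- biorthogonality `~Λₖ Λᵢ* = δ_{k,i} Id`
      (∀ (k i : ℕ) (y : StrongDual ℝ (Y i)),
        Λd k (opAdj (Λ i) y) = if h : i = k then h ▸ y else 0) ∧
      -- `~Λ` is a pg-Riesz basis for `X₂`
      ((∀ f : StrongDual ℝ X₂, (∀ i, Λd i f = 0) → f = 0) ∧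
        ∃ A' B' : ℝ, 0 < A' ∧ 0 < B' ∧
          ∀ (s : Finset ℕ) (h : ∀ i, StrongDual ℝ (StrongDual ℝ (Y i))),
            A' * (∑ i ∈ s, ‖h i‖ ^ p) ^ (1 / p) ≤ ‖∑ i ∈ s, opAdj (Λd i) (h i)‖ ∧
            ‖∑ i ∈ s, opAdj (Λd i) (h i)‖ ≤ B' * (∑ i ∈ s, ‖h i‖ ^ p) ^ (1 / p)) := by
  have hpq' : p.HolderConjugate q := Real.holderConjugate_iff.mpr ⟨hp, by simpa [one_div] using hpq⟩
  have : Fact (1 ≤ q) := ⟨hpq'.symm.lt.le⟩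
  have hB : IsUpperRieszBound (fun i => opAdj (Λ i)) q BΛ := fun s g => (hriesz s g).2
  have hA : IsLowerRieszBound (fun i => opAdj (Λ i)) q AΛ := fun s g => (hriesz s g).1
  have hsep := eq_zero_of_forall_apply_opAdj_eq_zero hreflX₂ Λ hcomplete
  set Λd := dualFamily (fun i => opAdj (Λ i)) hB hBΛ hA hAΛ hsep
  have hΛd : ∀ k i (y : StrongDual ℝ (Y i)),
      Λd k (opAdj (Λ i) y) = Pi.single (M := fun j => StrongDual ℝ (Y j)) i y k :=
    dualFamily_apply_apply
  refine ⟨Λd, fun f => ⟨summable_norm_dualFamily_rpow f, ?_, ?_⟩,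
    fun f => ⟨(hasSum_apply_dualFamily f).summable, (hasSum_apply_dualFamily f).tsum_eq⟩,
    fun k i y => ?_, fun f => eq_zero_of_forall_dualFamily_eq_zero,
    1 / BΛ, 1 / AΛ, by positivity, by positivity, fun s h => ⟨?_, ?_⟩⟩
  · simpa only [one_div] using inv_mul_norm_le_tsum_norm_dualFamily_rpow_rpow f
  · simpa only [one_div] using tsum_norm_dualFamily_rpow_rpow_le f
  · rcases eq_or_ne i k with rfl | hik
    · simp [hΛd]
    · simp [hΛd, hik, Ne.symm hik]
  · rw [one_div_mul_eq_div, div_le_iff₀ hBΛ, mul_comm]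
    exact sum_norm_rpow_rpow_le_mul_norm_sum_opAdj hpq' _ Λd hBΛ.le hB hΛd s h
  · exact norm_sum_opAdj_le hpq' Λd (by positivity)
      (fun f s => one_div AΛ ▸ sum_norm_dualFamily_rpow_rpow_le f s) s h

/-- a qg-Riesz basis `Λ` for `X₂*` with bounds `A_Λ, B_Λ` has a dual
sequence `~Λᵢ ∈ B(X₂*, Yᵢ*)` which is a qg-frame for `X₂*` with bounds `1/B_Λ, 1/A_Λ`,
satisfies the reconstruction `x* = Σᵢ Λᵢ* (~Λᵢ x*)` and the biorthogonality
`~Λₖ ∘ Λᵢ* = δ_{k,i} Id`, and is moreover a pg-Riesz basis for `X₂` (stated via the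
canonical double-dual realisation). -/
theorem qgRieszBasis_dual_sequence
    {X₂ : Type*} [NormedAddCommGroup X₂] [NormedSpace ℝ X₂] [CompleteSpace X₂]
    {Y : ℕ → Type*} [∀ i, NormedAddCommGroup (Y i)] [∀ i, NormedSpace ℝ (Y i)]
    [∀ i, CompleteSpace (Y i)]
    (hreflX₂ : Function.Surjective (inclusionInDoubleDual ℝ X₂))
    (hreflY : ∀ i, Function.Surjective (inclusionInDoubleDual ℝ (Y i)))
    (p q : ℝ) (hp : 1 < p) (hpq : 1 / p + 1 / q = 1)
    (Λ : ∀ i, X₂ →L[ℝ] Y i) (AΛ BΛ : ℝ) (hAΛ : 0 < AΛ) (hBΛ : 0 < BΛ)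
    (hcomplete : ∀ x : X₂, (∀ i, Λ i x = 0) → x = 0)
    (hriesz : ∀ (s : Finset ℕ) (g : ∀ i, StrongDual ℝ (Y i)),
      AΛ * (∑ i ∈ s, ‖g i‖ ^ q) ^ (1 / q) ≤ ‖∑ i ∈ s, opAdj (Λ i) (g i)‖ ∧
      ‖∑ i ∈ s, opAdj (Λ i) (g i)‖ ≤ BΛ * (∑ i ∈ s, ‖g i‖ ^ q) ^ (1 / q)) :
    ∃ Λd : ∀ i, StrongDual ℝ X₂ →L[ℝ] StrongDual ℝ (Y i),
      -- `~Λ` is a qg-frame for `X₂*` with bounds `1/B_Λ` and `1/A_Λ`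
      (∀ f : StrongDual ℝ X₂, Summable (fun i => ‖Λd i f‖ ^ q) ∧
        (1 / BΛ) * ‖f‖ ≤ (∑' i, ‖Λd i f‖ ^ q) ^ (1 / q) ∧
        (∑' i, ‖Λd i f‖ ^ q) ^ (1 / q) ≤ (1 / AΛ) * ‖f‖) ∧
      -- reconstruction
      (∀ f : StrongDual ℝ X₂, Summable (fun i => opAdj (Λ i) (Λd i f)) ∧
        (∑' i, opAdj (Λ i) (Λd i f)) = f) ∧
      -- biorthogonality `~Λₖ Λᵢ* = δ_{k,i} Id`
      (∀ (k i : ℕ) (y : StrongDual ℝ (Y i)),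
        Λd k (opAdj (Λ i) y) = if h : i = k then h ▸ y else 0) ∧
      -- `~Λ` is a pg-Riesz basis for `X₂`
      ((∀ f : StrongDual ℝ X₂, (∀ i, Λd i f = 0) → f = 0) ∧
        ∃ A' B' : ℝ, 0 < A' ∧ 0 < B' ∧
          ∀ (s : Finset ℕ) (h : ∀ i, StrongDual ℝ (StrongDual ℝ (Y i))),
            A' * (∑ i ∈ s, ‖h i‖ ^ p) ^ (1 / p) ≤ ‖∑ i ∈ s, opAdj (Λd i) (h i)‖ ∧
            ‖∑ i ∈ s, opAdj (Λd i) (h i)‖ ≤ B' * (∑ i ∈ s, ‖h i‖ ^ p) ^ (1 / p)) :=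
  qgRieszBasis_dual_sequence_general hreflX₂ p q hp hpq Λ AΛ BΛ hAΛ hBΛ hcomplete hriesz
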